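/- arXiv:1811.03747 — 2 statements merged into one kernel-verified Lean document; each statement's English description precedes it below -/
import Mathlib

section
/- For every integer k ≥ 2 and every T⃗₃-free oriented graph G on n vertices, the number of induced copies of the directed path P⃗_k in G is at most n^k / k^{k−1}. Consequently, the inducibility of P⃗_k in the family T⃗ of T⃗₃-free oriented graphs satisfies I(P⃗_k, T⃗) ≤ k! / k^{k−1}. -/
open scoped Classical

/-- An oriented graph: the arc relation has no loops and no 2-cycles. -/
def IsOriented {V : Type*} (A : V → V → Prop) : Prop :=
  ∀ a b : V, A a b → ¬ A b a

/-- `T⃗₃`-freeness: no three vertices span the arcs a→b, b→c, a→c. -/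
def T3Free {V : Type*} (A : V → V → Prop) : Prop :=
  ∀ a b c : V, ¬ (A a b ∧ A b c ∧ A a c)

/-- `S` is the vertex set of an induced copy of the directed path `P⃗ₖ` in the
oriented graph with arc relation `A`. -/
def IsInducedPath {V : Type*} (A : V → V → Prop) (k : ℕ) (S : Finset V) : Prop :=
  ∃ f : Fin k → V, Function.Injective f ∧ (∀ v : V, v ∈ S ↔ ∃ i, f i = v) ∧
    ∀ i j : Fin k, A (f i) (f j) ↔ (j : ℕ) = (i : ℕ) + 1

/-- The number of induced copies of `P⃗ₖ`. -/
noncomputable def numPaths {V : Type*} [Fintype V] [DecidableEq V]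
    (A : V → V → Prop) (k : ℕ) : ℕ :=
  (Finset.univ.filter fun S : Finset V => IsInducedPath A k S).card

/-- The number of induced copies of `P⃗ₖ` containing all vertices of `T`. -/
noncomputable def numPathsThrough {V : Type*} [Fintype V] [DecidableEq V]
    (A : V → V → Prop) (k : ℕ) (T : Finset V) : ℕ :=
  (Finset.univ.filter fun S : Finset V => IsInducedPath A k S ∧ T ⊆ S).card

/-- The density of induced copies of `P⃗ₖ`. -/
noncomputable def pathDensity {V : Type*} [Fintype V] [DecidableEq V]
    (A : V → V → Prop) (k : ℕ) : ℝ :=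
  (numPaths A k : ℝ) / ((Fintype.card V).choose k : ℝ)

/-- The maximum density of induced copies of `P⃗ₖ` over all `T⃗₃`-free oriented
graphs on `n` vertices. -/
noncomputable def maxDensityT3 (k n : ℕ) : ℝ :=
  sSup {d : ℝ | ∃ A : Fin n → Fin n → Prop, IsOriented A ∧ T3Free A ∧ d = pathDensity A k}

/-- The maximum density of induced copies of `P⃗ₖ` over all oriented graphs on `n`
vertices. -/
noncomputable def maxDensityAll (k n : ℕ) : ℝ :=
  sSup {d : ℝ | ∃ A : Fin n → Fin n → Prop, IsOriented A ∧ d = pathDensity A k}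

/-- `S` is the vertex set of an induced copy of the oriented graph `H` in the
oriented graph with arc relation `A`. -/
def IsInducedCopy {V W : Type*} (H : W → W → Prop) (A : V → V → Prop) (S : Finset V) : Prop :=
  ∃ f : W → V, Function.Injective f ∧ (∀ v : V, v ∈ S ↔ ∃ w, f w = v) ∧
    ∀ a b : W, A (f a) (f b) ↔ H a b

/-- The number of induced copies of `H` in `A`. -/
noncomputable def numCopies {V W : Type*} [Fintype V] [DecidableEq V]
    (H : W → W → Prop) (A : V → V → Prop) : ℕ :=
  (Finset.univ.filter fun S : Finset V => IsInducedCopy H A S).card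

/-- The number of (unordered) pairs of vertices on which the two oriented graphs `A`
and `B` differ (an arc must be added, removed, or reoriented). -/
noncomputable def pairDiff {V : Type*} [Fintype V] [LinearOrder V]
    (A B : V → V → Prop) : ℕ :=
  (Finset.univ.filter fun p : V × V => p.1 < p.2 ∧
    ¬ ((A p.1 p.2 ↔ B p.1 p.2) ∧ (A p.2 p.1 ↔ B p.2 p.1))).card

/-- `A` is a blow-up of the directed 5-cycle with parts given by the fibers of `g`. -/
def IsBlowupC5 {V : Type*} (A : V → V → Prop) (g : V → Fin 5) : Prop :=
  ∀ u v : V, A u v ↔ g v = g u + 1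

/-- The size of the part of vertices mapped to `i`. -/
noncomputable def partSize {V : Type*} [Fintype V] {m : ℕ} (g : V → Fin m) (i : Fin m) : ℕ :=
  (Finset.univ.filter fun v : V => g v = i).card

/-- `A` is a balanced blow-up of the directed 5-cycle, i.e. isomorphic to `C⃗₅(n)`. -/
def IsBalancedBlowupC5 {V : Type*} [Fintype V] (A : V → V → Prop) : Prop :=
  ∃ g : V → Fin 5, IsBlowupC5 A g ∧
    ∀ i j : Fin 5, (partSize g i : ℤ) - (partSize g j : ℤ) ≤ 1
/-! Count injective sequences along induced paths instead of vertex sets. Once a prefix is fixed,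
the remaining vertices must avoid the prefix and its neighbourhood, except that the next one is an
out-neighbour of the last vertex; if `M` candidates remain and `b` of them can come next, each of
those leaves at most `M - b` candidates, so by AM–GM a prefix has at most `(M / r) ^ r` completions
by `r` vertices. Starting from an arc `x → y`, `T⃗₃`-freeness makes `N⁺(x)`, `N⁻(x)`, `N⁻(y)`
disjoint, so at most `n - d⁺(x) - d⁻(x) - d⁻(y)` candidates remain. This is the average of
`n - 2 d(x)` and `n - 2 d⁻(y)`, so convexity turns the sum over arcs into a sum over vertices of
`d⁺(v) (n - 2 d(v)) ^ d + d⁻(v) (n - 2 d⁻(v)) ^ d` (with `k = d + 2`), and a two-step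
one-variable optimisation bounds each of these by `2 d ^ d n ^ (d + 1) / (d + 2) ^ (d + 1)`.
The density bound follows since `n.choose k ~ n ^ k / k!`. -/

section Analytic

open Real

theorem mul_pow_mul_succ_pow_le_add_pow (d : ℕ) {x y : ℝ} (hx : 0 ≤ x) (hy : 0 ≤ y) :
    x * y ^ d * ((d : ℝ) + 1) ^ (d + 1) ≤ (x + d * y) ^ (d + 1) := by
  rcases hy.eq_or_lt with rfl | hy
  · rcases d with _ | d <;> simp [hx]
  -- Bernoulli's inequality at `1 + t = (x + d y) / ((d + 1) y)`.
  have hd : (0 : ℝ) < d + 1 := by positivity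
  have bernoulli := one_add_mul_le_pow (a := (x - y) / ((d + 1) * y))
    (by rw [le_div_iff₀ (by positivity)]; nlinarith) (d + 1)
  have h1 : 1 + ((d + 1 : ℕ) : ℝ) * ((x - y) / ((d + 1) * y)) = x / y := by
    push_cast; field_simp; ring
  have h2 : 1 + (x - y) / ((d + 1) * y) = (x + d * y) / ((d + 1) * y) := by
    field_simp; ring
  rw [h1, h2, div_pow, mul_pow, div_le_div_iff₀ hy (by positivity)] at bernoulli
  rw [pow_succ y d] at bernoulli
  refine le_of_mul_le_mul_right ?_ hy
  linarith

theorem mul_div_pow_le_div_pow (r : ℕ) {b M : ℝ} (hb : 0 ≤ b) (hbM : b ≤ M) :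
    b * ((M - b) / r) ^ r ≤ (M / (r + 1)) ^ (r + 1) := by
  rcases Nat.eq_zero_or_pos r with rfl | hr
  · simpa using hbM
  have hr' : (0 : ℝ) < r := by exact_mod_cast hr
  have h := mul_pow_mul_succ_pow_le_add_pow r hb (div_nonneg (sub_nonneg.2 hbM) hr'.le)
  rw [mul_div_cancel₀ _ hr'.ne', add_sub_cancel] at h
  rw [div_pow M, le_div_iff₀ (by positivity)]
  exact h

theorem add_div_two_pow_le {X Y : ℝ} (hX : 0 ≤ X) (hY : 0 ≤ Y) (d : ℕ) :
    ((X + Y) / 2) ^ d ≤ (X ^ d + Y ^ d) / 2 := by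
  have := (convexOn_pow d).2 hX hY (by norm_num : (0 : ℝ) ≤ 1 / 2) (by norm_num : (0 : ℝ) ≤ 1 / 2)
    (by norm_num)
  simp only [smul_eq_mul] at this
  rw [show (X + Y) / 2 = 1 / 2 * X + 1 / 2 * Y by ring]
  linarith

/-- The maximum of `u (1 - u) ^ d` over `0 ≤ u ≤ 1`, attained at `u = 1 / (d + 1)`. -/
noncomputable def peakConst (d : ℕ) : ℝ := (d : ℝ) ^ d / ((d : ℝ) + 1) ^ (d + 1)

theorem mul_sub_pow_le_peakConst_mul (d : ℕ) {u M : ℝ} (hu : 0 ≤ u) (huM : u ≤ M) :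
    u * (M - u) ^ d ≤ peakConst d * M ^ (d + 1) := by
  rcases Nat.eq_zero_or_pos d with rfl | hd
  · simpa [peakConst] using huM
  have hd' : (0 : ℝ) < d := by exact_mod_cast hd
  have h := mul_pow_mul_succ_pow_le_add_pow d hu (div_nonneg (sub_nonneg.2 huM) hd'.le)
  rw [mul_div_cancel₀ _ hd'.ne', add_sub_cancel, div_pow] at h
  rw [peakConst, div_mul_eq_mul_div, le_div_iff₀ (by positivity)]
  calc u * (M - u) ^ d * ((d : ℝ) + 1) ^ (d + 1)
      = (d : ℝ) ^ d * (u * ((M - u) ^ d / (d : ℝ) ^ d) * ((d : ℝ) + 1) ^ (d + 1)) := by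
        field_simp
    _ ≤ (d : ℝ) ^ d * M ^ (d + 1) := by gcongr

theorem pow_mul_sub_le_peakConst_mul (d : ℕ) {u M : ℝ} (hu : 0 ≤ u) (huM : u ≤ M) :
    u ^ d * (M - u) ≤ peakConst d * M ^ (d + 1) := by
  have h := mul_sub_pow_le_peakConst_mul d (sub_nonneg.2 huM) (sub_le_self M hu)
  rwa [sub_sub_cancel, mul_comm] at h

theorem peakConst_mul_succ_pow (d : ℕ) : peakConst d * ((d : ℝ) + 1) ^ (d + 1) = (d : ℝ) ^ d := by
  rw [peakConst]; field_simp

theorem peakConst_lt_one {d : ℕ} (hd : 0 < d) : peakConst d < 1 := by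
  have hd' : (0 : ℝ) < d := by exact_mod_cast hd
  rw [peakConst, div_lt_one (by positivity), pow_succ]
  calc (d : ℝ) ^ d ≤ ((d : ℝ) + 1) ^ d := by gcongr; linarith
    _ < ((d : ℝ) + 1) ^ d * ((d : ℝ) + 1) := lt_mul_of_one_lt_right (by positivity) (by linarith)

theorem add_two_pow_succ_le_exp_one_mul (d : ℕ) :
    ((d : ℝ) + 2) ^ (d + 1) ≤ exp 1 * ((d : ℝ) + 1) ^ (d + 1) := by
  have h := one_add_inv_pow_le_exp (n := d + 1)
  have e : (d : ℝ) + 2 = ((d : ℝ) + 1) * (1 + ((d + 1 : ℕ) : ℝ)⁻¹) := by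
    push_cast; field_simp; ring
  rw [e, mul_pow, mul_comm]
  gcongr

theorem nat_mul_peakConst_le_exp_neg_one (d : ℕ) : d * peakConst d ≤ exp (-1) := by
  have h := one_sub_div_pow_le_exp_neg (n := d + 1) (t := 1) (by push_cast; linarith)
  have e : (d : ℝ) * peakConst d = (1 - 1 / ((d + 1 : ℕ) : ℝ)) ^ (d + 1) := by
    have h1 : (1 : ℝ) - 1 / ((d + 1 : ℕ) : ℝ) = d / (d + 1) := by push_cast; field_simp; ring
    rw [h1, div_pow, peakConst, pow_succ (d : ℝ)]
    ring
  rwa [e]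

theorem exp_neg_div_one_sub_le_one_sub {κ : ℝ} (hκ : κ < 1) : exp (-(κ / (1 - κ))) ≤ 1 - κ := by
  have h1κ : 0 < 1 - κ := by linarith
  have h := add_one_le_exp (κ / (1 - κ))
  rw [exp_neg, inv_le_comm₀ (exp_pos _) h1κ]
  calc (1 - κ)⁻¹ = κ / (1 - κ) + 1 := by field_simp; ring
    _ ≤ exp (κ / (1 - κ)) := h

theorem add_two_pow_succ_le_four_mul (d : ℕ) (hd : 0 < d) :
    ((d : ℝ) + 2) ^ (d + 1) ≤ 4 * (1 - peakConst d) ^ d * ((d : ℝ) + 1) ^ (d + 1) := by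
  rcases lt_or_ge d 10 with hsmall | hlarge
  · interval_cases d <;> norm_num [peakConst]
  -- For `d ≥ 10`, with `κ = peakConst d`: `((d + 2) / (d + 1)) ^ (d + 1) ≤ e`,
  -- `(1 - κ) ^ d ≥ exp (-d κ / (1 - κ))` and `d κ ≤ 1 / e`, while `exp (1 + 0.385) < 4`.
  have hκ0 : 0 ≤ peakConst d := by unfold peakConst; positivity
  set κ := peakConst d
  have hd10 : (10 : ℝ) ≤ d := by exact_mod_cast hlarge
  have hdκ : d * κ ≤ 0.368 := by
    refine (nat_mul_peakConst_le_exp_neg_one d).trans ?_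
    rw [exp_neg, inv_le_comm₀ (exp_pos 1) (by norm_num)]
    exact le_trans (by norm_num) exp_one_gt_d9.le
  have hκ : κ ≤ 0.0368 := by nlinarith
  set s := d * κ / (1 - κ)
  have hs : s ≤ 0.385 := by
    rw [div_le_iff₀ (by linarith)]; nlinarith
  have hexp : exp 1 ≤ 4 * exp (-s) := by
    have h4 : exp (1 + s) ≤ 4 := calc
      exp (1 + s) ≤ exp (2 * log 2) := exp_le_exp.2 (by linarith [log_two_gt_d9])
      _ = 4 := by rw [two_mul, exp_add, exp_log two_pos]; norm_num
    calc exp 1 = exp (1 + s) * exp (-s) := by rw [← exp_add]; ring_nf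
      _ ≤ 4 * exp (-s) := by gcongr
  have hpow : exp (-s) ≤ (1 - κ) ^ d := calc
    exp (-s) = exp (-(κ / (1 - κ))) ^ d := by rw [← exp_nat_mul, mul_neg, ← mul_div_assoc]
    _ ≤ (1 - κ) ^ d := by gcongr; exact exp_neg_div_one_sub_le_one_sub (peakConst_lt_one hd)
  calc ((d : ℝ) + 2) ^ (d + 1) ≤ exp 1 * ((d : ℝ) + 1) ^ (d + 1) :=
        add_two_pow_succ_le_exp_one_mul d
    _ ≤ 4 * (1 - κ) ^ d * ((d : ℝ) + 1) ^ (d + 1) := by gcongr; linarith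

/-- With `κ = peakConst d` and `M = n - 2 c`, the first term is at most `κ M ^ (d + 1) / 2`, so the
sum is at most `M ^ d (n - (1 - κ) M) / 2 ≤ κ n ^ (d + 1) / (2 (1 - κ) ^ d)`. -/
theorem mul_max_pow_add_mul_max_pow_le (d : ℕ) {a c n : ℝ} (ha : 0 ≤ a) (hc : 0 ≤ c)
    (hacn : a + c ≤ n) :
    a * max 0 (n - 2 * a - 2 * c) ^ d + c * max 0 (n - 2 * c) ^ d
      ≤ 2 * (d : ℝ) ^ d * n ^ (d + 1) / ((d : ℝ) + 2) ^ (d + 1) := by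
  have hn : 0 ≤ n := by linarith
  rcases Nat.eq_zero_or_pos d with rfl | hd
  · simp only [pow_zero, mul_one, CharP.cast_eq_zero, zero_add, pow_one]
    linarith
  rcases le_or_gt (n - 2 * c) 0 with hM | hM
  · rw [max_eq_left hM, max_eq_left (by linarith), zero_pow hd.ne']
    simp only [mul_zero, add_zero]
    positivity
  have hκ0 : 0 ≤ peakConst d := by unfold peakConst; positivity
  have hκ1 := peakConst_lt_one hd
  set κ := peakConst d
  set M := n - 2 * c with hMdef
  have hX : a * max 0 (M - 2 * a) ^ d ≤ κ * M ^ (d + 1) / 2 := by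
    rcases le_or_gt (M - 2 * a) 0 with h | h
    · rw [max_eq_left h, zero_pow hd.ne', mul_zero]; positivity
    · have := mul_sub_pow_le_peakConst_mul d (u := 2 * a) (M := M) (by linarith) (by linarith)
      rw [max_eq_right h.le]; linarith
  set P := M ^ d * (n - (1 - κ) * M)
  have hP : 0 ≤ P := by
    have : 0 ≤ n - (1 - κ) * M := by nlinarith
    positivity
  have hLHS : a * max 0 (n - 2 * a - 2 * c) ^ d + c * max 0 (n - 2 * c) ^ d ≤ P / 2 := by
    rw [show n - 2 * a - 2 * c = M - 2 * a by ring, max_eq_right hM.le]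
    calc _ ≤ κ * M ^ (d + 1) / 2 + c * M ^ d := by gcongr
      _ = P / 2 := by simp only [P, hMdef]; ring
  have hPQ : P * (1 - κ) ^ d ≤ κ * n ^ (d + 1) := by
    have := pow_mul_sub_le_peakConst_mul d (u := (1 - κ) * M) (M := n) (by nlinarith)
      (by nlinarith)
    calc P * (1 - κ) ^ d = ((1 - κ) * M) ^ d * (n - (1 - κ) * M) := by
          simp only [P]; rw [mul_pow]; ring
      _ ≤ κ * n ^ (d + 1) := this
  have hkey := add_two_pow_succ_le_four_mul d hd
  rw [le_div_iff₀ (by positivity), ← peakConst_mul_succ_pow d]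
  calc _ ≤ P / 2 * ((d : ℝ) + 2) ^ (d + 1) := by gcongr
    _ ≤ P / 2 * (4 * (1 - κ) ^ d * ((d : ℝ) + 1) ^ (d + 1)) := by gcongr
    _ = 2 * ((d : ℝ) + 1) ^ (d + 1) * (P * (1 - κ) ^ d) := by ring
    _ ≤ 2 * ((d : ℝ) + 1) ^ (d + 1) * (κ * n ^ (d + 1)) := by gcongr
    _ = _ := by ring

end Analytic

open Finset

section PathTuples

variable {V : Type*} (A : V → V → Prop)

def IsPathTuple {m : ℕ} (p : Fin m → V) : Prop :=
  Function.Injective p ∧ ∀ i j : Fin m, A (p i) (p j) ↔ (j : ℕ) = i + 1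

noncomputable def pathExtensions [Fintype V] {m k : ℕ} (hmk : m ≤ k) (p : Fin m → V) :
    Finset (Fin k → V) :=
  univ.filter fun f => IsPathTuple A f ∧ ∀ i, f (Fin.castLE hmk i) = p i

noncomputable def nextVertices [Fintype V] {m : ℕ} (p : Fin m → V) : Finset V :=
  univ.filter fun u => IsPathTuple A (Fin.snoc p u : Fin (m + 1) → V)

/-- The vertices that may still occur after the prefix `p` of an induced path: off `p` and
non-adjacent to it, except that they may be out-neighbours of its last vertex. -/
noncomputable def candidates [Fintype V] {m : ℕ} (p : Fin m → V) : Finset V :=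
  univ.filter fun u => ∀ i : Fin m, u ≠ p i ∧ ¬ A u (p i) ∧ ((i : ℕ) + 1 < m → ¬ A (p i) u)

variable {A}

theorem IsPathTuple.castLE {m k : ℕ} {f : Fin k → V} (hf : IsPathTuple A f) (hmk : m ≤ k) :
    IsPathTuple A fun i : Fin m => f (Fin.castLE hmk i) :=
  ⟨hf.1.comp (Fin.castLE_injective hmk), fun i j => by
    simpa using hf.2 (i.castLE hmk) (j.castLE hmk)⟩

variable [Fintype V] (A)

theorem nextVertices_subset_candidates {m : ℕ} (p : Fin m → V) :
    nextVertices A p ⊆ candidates A p := by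
  intro u hu
  obtain ⟨hinj, hadj⟩ := (mem_filter.1 hu).2
  refine mem_filter.2 ⟨mem_univ _, fun i => ⟨fun h => ?_, fun h => ?_, fun hi h => ?_⟩⟩
  · have := hinj (a₁ := Fin.last m) (a₂ := i.castSucc) (by simpa using h)
    exact absurd (congrArg Fin.val this) (by simp only [Fin.val_last, Fin.val_castSucc]; omega)
  · have := (hadj (Fin.last m) i.castSucc).1 (by simpa using h)
    simp only [Fin.val_last, Fin.val_castSucc] at this; omega
  · have := (hadj i.castSucc (Fin.last m)).1 (by simpa using h)
    simp only [Fin.val_last, Fin.val_castSucc] at this; omega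

theorem candidates_snoc_subset {m : ℕ} (hm : 0 < m) (p : Fin m → V) (u : V) :
    candidates A (Fin.snoc p u : Fin (m + 1) → V) ⊆ candidates A p \ nextVertices A p := by
  intro w hw
  have hp : ∀ i : Fin m, w ≠ p i ∧ ¬ A w (p i) ∧ ¬ A (p i) w := fun i => by
    simpa using (mem_filter.1 hw).2 i.castSucc
  refine mem_sdiff.2 ⟨mem_filter.2 ⟨mem_univ _, fun i =>
    ⟨(hp i).1, (hp i).2.1, fun _ => (hp i).2.2⟩⟩, fun hnext => (hp ⟨m - 1, by omega⟩).2.2 ?_⟩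
  have := ((mem_filter.1 hnext).2.2 (Fin.castSucc ⟨m - 1, by omega⟩) (Fin.last m)).2
    (by simp only [Fin.val_last, Fin.castSucc_mk]; omega)
  rwa [Fin.snoc_castSucc, Fin.snoc_last] at this

theorem pathExtensions_filter_eq {m k : ℕ} (hmk : m + 1 ≤ k) (p : Fin m → V) (u : V) :
    (pathExtensions A (Nat.le_of_succ_le hmk) p).filter (fun f => f ⟨m, hmk⟩ = u)
      = pathExtensions A hmk (Fin.snoc p u) := by
  ext f
  simp only [pathExtensions, mem_filter, mem_univ, true_and, Fin.forall_fin_succ',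
    Fin.snoc_castSucc, Fin.snoc_last, and_assoc]
  rfl

theorem card_pathExtensions_eq_sum {m k : ℕ} (hmk : m + 1 ≤ k) (p : Fin m → V) :
    (pathExtensions A (Nat.le_of_succ_le hmk) p).card
      = ∑ u ∈ nextVertices A p, (pathExtensions A hmk (Fin.snoc p u)).card := by
  rw [card_eq_sum_card_fiberwise (f := fun f => f ⟨m, hmk⟩) (t := nextVertices A p)]
  · simp only [pathExtensions_filter_eq A]
  · intro f hf
    obtain ⟨hpath, hpre⟩ := (mem_filter.1 hf).2
    refine mem_filter.2 ⟨mem_univ _, ?_⟩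
    convert hpath.castLE hmk using 1
    ext i
    induction i using Fin.lastCases with
    | last => simp only [Fin.snoc_last]; rfl
    | cast j => simpa using (hpre j).symm

theorem card_pathExtensions_le (r : ℕ) {m k : ℕ} (hm : 0 < m) (hmk : m + r = k)
    (p : Fin m → V) :
    ((pathExtensions A (by omega : m ≤ k) p).card : ℝ) ≤ ((candidates A p).card / r : ℝ) ^ r := by
  induction r generalizing m with
  | zero =>
    subst hmk
    have : (pathExtensions A le_rfl p).card ≤ 1 := card_le_one.2 fun f hf g hg => by
      ext i
      simpa using ((mem_filter.1 hf).2.2 i).trans ((mem_filter.1 hg).2.2 i).symm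
    simpa using this
  | succ r ih =>
    have hmk' : m + 1 ≤ k := by omega
    have hsub := nextVertices_subset_candidates A p
    set b := ((nextVertices A p).card : ℝ)
    set M := ((candidates A p).card : ℝ)
    have hbM : b ≤ M := Nat.cast_le.2 (card_le_card hsub)
    have hchild : ∀ u, ((pathExtensions A hmk' (Fin.snoc p u)).card : ℝ) ≤ ((M - b) / r) ^ r := by
      intro u
      refine (ih (m := m + 1) (by omega) (by omega) _).trans ?_
      gcongr
      have := card_le_card (candidates_snoc_subset A hm p u)
      rw [card_sdiff_of_subset hsub] at this
      rw [← Nat.cast_sub (card_le_card hsub)]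
      exact_mod_cast this
    rw [card_pathExtensions_eq_sum A hmk']
    push_cast
    calc _ ≤ ∑ _u ∈ nextVertices A p, ((M - b) / r) ^ r := sum_le_sum fun u _ => hchild u
      _ = b * ((M - b) / r) ^ r := by rw [sum_const, nsmul_eq_mul]
      _ ≤ (M / (r + 1)) ^ (r + 1) := mul_div_pow_le_div_pow r (by positivity) hbM
      _ = _ := by ring

end PathTuples

section OrientedGraph

variable {V : Type*} [Fintype V] (A : V → V → Prop)

noncomputable def outNbrs (x : V) : Finset V := univ.filter (A x ·)

noncomputable def inNbrs (x : V) : Finset V := univ.filter (A · x)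

theorem sum_sum_outNbrs_add (g h : V → ℝ) :
    ∑ x, ∑ y ∈ outNbrs A x, (g x + h y)
      = ∑ v, ((outNbrs A v).card * g v + (inNbrs A v).card * h v) := by
  simp only [sum_add_distrib, sum_const, nsmul_eq_mul]
  congr 1
  rw [sum_comm' (t' := univ) (s' := inNbrs A) (fun x y => by simp [outNbrs, inNbrs])]
  simp

theorem nextVertices_singleton_subset_outNbrs (x : V) : nextVertices A ![x] ⊆ outNbrs A x := by
  intro y hy
  have := ((mem_filter.1 hy).2.2 0 1).2 rfl
  simpa [outNbrs] using this

theorem card_pathExtensions_singleton_le (x : V) (d : ℕ) :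
    ((pathExtensions A (by omega : 1 ≤ d + 2) ![x]).card : ℝ)
      ≤ ∑ y ∈ outNbrs A x, ((candidates A ![x, y]).card / d : ℝ) ^ d := by
  rw [card_pathExtensions_eq_sum A (show 1 + 1 ≤ d + 2 by omega)]
  push_cast
  calc _ ≤ ∑ y ∈ nextVertices A ![x], ((candidates A ![x, y]).card / d : ℝ) ^ d := by
        refine sum_le_sum fun y _ => ?_
        have := card_pathExtensions_le A d two_pos (add_comm 2 d) (Fin.snoc ![x] y)
        rwa [show (Fin.snoc ![x] y : Fin 2 → V) = ![x, y] by simp] at this ⊢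
    _ ≤ _ := sum_le_sum_of_subset_of_nonneg (nextVertices_singleton_subset_outNbrs A x)
        fun _ _ _ => by positivity

theorem card_pathExtensions_nil_le_sum_arcs (d : ℕ) :
    ((pathExtensions A (Nat.zero_le (d + 2)) ![]).card : ℝ)
      ≤ ∑ x, ∑ y ∈ outNbrs A x, ((candidates A ![x, y]).card / d : ℝ) ^ d := by
  rw [card_pathExtensions_eq_sum A (show 0 + 1 ≤ d + 2 by omega)]
  push_cast
  calc _ ≤ ∑ x ∈ nextVertices A ![],
          ∑ y ∈ outNbrs A x, ((candidates A ![x, y]).card / d : ℝ) ^ d := by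
        refine sum_le_sum fun x _ => ?_
        have := card_pathExtensions_singleton_le A x d
        rwa [show (Fin.snoc ![] x : Fin 1 → V) = ![x] by simp]
    _ ≤ _ := sum_le_sum_of_subset_of_nonneg (subset_univ _) fun _ _ _ => by positivity

theorem numPaths_le_card_pathExtensions_nil [DecidableEq V] (k : ℕ) :
    numPaths A k ≤ (pathExtensions A (Nat.zero_le k) ![]).card := by
  refine (card_le_card ?_).trans (card_image_le (f := fun f : Fin k → V => univ.image f))
  intro S hS
  obtain ⟨f, hinj, hmem, hadj⟩ := (mem_filter.1 hS).2
  refine mem_image.2 ⟨f, mem_filter.2 ⟨mem_univ _, ⟨hinj, hadj⟩, finZeroElim⟩, ?_⟩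
  ext v
  simp [hmem v]

variable {A}

theorem card_outNbrs_add_card_inNbrs_le (hA : IsOriented A) (v : V) :
    (outNbrs A v).card + (inNbrs A v).card ≤ Fintype.card V := by
  have hdisj : Disjoint (outNbrs A v) (inNbrs A v) :=
    disjoint_filter.2 fun u _ h h' => hA v u h h'
  rw [← card_union_of_disjoint hdisj]
  exact card_le_univ _

/-- `T⃗₃`-freeness makes the in- and out-neighbourhoods of `x` and the in-neighbourhood of `y`
disjoint. -/
theorem card_candidates_pair_add_le (hA : IsOriented A) (hT : T3Free A) {x y : V} (hxy : A x y) :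
    (candidates A ![x, y]).card + ((outNbrs A x).card + (inNbrs A x).card + (inNbrs A y).card)
      ≤ Fintype.card V := by
  have hdisj₁ : Disjoint (outNbrs A x) (inNbrs A x) :=
    disjoint_filter.2 fun u _ h h' => hA x u h h'
  have hdisj₂ : Disjoint (outNbrs A x ∪ inNbrs A x) (inNbrs A y) := by
    refine disjoint_left.2 fun u hu hu' => ?_
    have hu' : A u y := (mem_filter.1 hu').2
    rcases mem_union.1 hu with hu | hu
    · exact hT x u y ⟨(mem_filter.1 hu).2, hu', hxy⟩
    · exact hT u x y ⟨(mem_filter.1 hu).2, hxy, hu'⟩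
  have hdisj₃ : Disjoint (candidates A ![x, y]) (outNbrs A x ∪ inNbrs A x ∪ inNbrs A y) := by
    refine disjoint_left.2 fun u hu hu' => ?_
    obtain ⟨-, hux, hxu⟩ := (mem_filter.1 hu).2 0
    obtain ⟨-, huy, -⟩ := (mem_filter.1 hu).2 1
    simp only [outNbrs, inNbrs, mem_union, mem_filter, mem_univ, true_and] at hu'
    rcases hu' with (h | h) | h
    · exact hxu (by norm_num) h
    · exact hux h
    · exact huy h
  rw [← card_union_of_disjoint hdisj₁, ← card_union_of_disjoint hdisj₂,
    ← card_union_of_disjoint hdisj₃]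
  exact card_le_univ _

theorem pow_card_candidates_pair_le (hA : IsOriented A) (hT : T3Free A) {x y : V} (hxy : A x y)
    (d : ℕ) :
    ((candidates A ![x, y]).card : ℝ) ^ d
      ≤ (max 0 ((Fintype.card V : ℝ) - 2 * (outNbrs A x).card - 2 * (inNbrs A x).card) ^ d
          + max 0 ((Fintype.card V : ℝ) - 2 * (inNbrs A y).card) ^ d) / 2 := by
  set X := max 0 ((Fintype.card V : ℝ) - 2 * (outNbrs A x).card - 2 * (inNbrs A x).card)
  set Y := max 0 ((Fintype.card V : ℝ) - 2 * (inNbrs A y).card)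
  have hcard : ((candidates A ![x, y]).card : ℝ) ≤ (X + Y) / 2 := by
    have : ((candidates A ![x, y]).card : ℝ) + ((outNbrs A x).card + (inNbrs A x).card
        + (inNbrs A y).card) ≤ Fintype.card V := by
      exact_mod_cast card_candidates_pair_add_le hA hT hxy
    linarith [le_max_right 0
      ((Fintype.card V : ℝ) - 2 * (outNbrs A x).card - 2 * (inNbrs A x).card),
      le_max_right 0 ((Fintype.card V : ℝ) - 2 * (inNbrs A y).card)]
  calc ((candidates A ![x, y]).card : ℝ) ^ d ≤ ((X + Y) / 2) ^ d := by gcongr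
    _ ≤ _ := add_div_two_pow_le (le_max_left _ _) (le_max_left _ _) d

theorem sum_arcs_pow_card_candidates_le (hA : IsOriented A) (hT : T3Free A) (d : ℕ) :
    ∑ x, ∑ y ∈ outNbrs A x, ((candidates A ![x, y]).card / d : ℝ) ^ d
      ≤ (Fintype.card V : ℝ) ^ (d + 2) / ((d : ℝ) + 2) ^ (d + 1) := by
  have hdd : (0 : ℝ) < (d : ℝ) ^ d := by
    rcases Nat.eq_zero_or_pos d with rfl | hd
    · simp
    · positivity
  set X : V → ℝ := fun v =>
    max 0 ((Fintype.card V : ℝ) - 2 * (outNbrs A v).card - 2 * (inNbrs A v).card)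
  set Y : V → ℝ := fun v => max 0 ((Fintype.card V : ℝ) - 2 * (inNbrs A v).card)
  calc _ ≤ ∑ x, ∑ y ∈ outNbrs A x, (X x ^ d / (2 * d ^ d) + Y y ^ d / (2 * d ^ d)) := by
        refine sum_le_sum fun x _ => sum_le_sum fun y hy => ?_
        rw [div_pow, ← add_div, ← div_div]
        gcongr
        exact pow_card_candidates_pair_le hA hT (mem_filter.1 hy).2 d
    _ = ∑ v, ((outNbrs A v).card * (X v ^ d / (2 * d ^ d))
          + (inNbrs A v).card * (Y v ^ d / (2 * d ^ d))) := sum_sum_outNbrs_add A _ _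
    _ ≤ ∑ _v : V, (Fintype.card V : ℝ) ^ (d + 1) / ((d : ℝ) + 2) ^ (d + 1) := by
        refine sum_le_sum fun v _ => ?_
        have := mul_max_pow_add_mul_max_pow_le d (Nat.cast_nonneg (outNbrs A v).card)
          (Nat.cast_nonneg (inNbrs A v).card) (n := Fintype.card V)
          (by exact_mod_cast card_outNbrs_add_card_inNbrs_le hA v)
        calc _ = ((outNbrs A v).card * X v ^ d + (inNbrs A v).card * Y v ^ d) / (2 * d ^ d) := by
              ring
          _ ≤ 2 * (d : ℝ) ^ d * (Fintype.card V : ℝ) ^ (d + 1) / ((d : ℝ) + 2) ^ (d + 1)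
              / (2 * d ^ d) := by gcongr
          _ = _ := by field_simp
    _ = _ := by rw [sum_const, card_univ, nsmul_eq_mul]; ring

theorem numPaths_le_of_t3Free [DecidableEq V] (hA : IsOriented A) (hT : T3Free A) {k : ℕ}
    (hk : 2 ≤ k) : (numPaths A k : ℝ) ≤ (Fintype.card V : ℝ) ^ k / (k : ℝ) ^ (k - 1) := by
  obtain ⟨d, rfl⟩ : ∃ d, k = d + 2 := ⟨k - 2, by omega⟩
  calc (numPaths A (d + 2) : ℝ) ≤ (pathExtensions A (Nat.zero_le (d + 2)) ![]).card := by
        exact_mod_cast numPaths_le_card_pathExtensions_nil A (d + 2)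
    _ ≤ _ := card_pathExtensions_nil_le_sum_arcs A d
    _ ≤ _ := sum_arcs_pow_card_candidates_le hA hT d
    _ = _ := by push_cast; ring_nf

end OrientedGraph

section Density

open Filter Topology Asymptotics

theorem tendsto_pow_div_choose (k : ℕ) :
    Tendsto (fun n : ℕ => (n : ℝ) ^ k / n.choose k) atTop (𝓝 k.factorial) := by
  have h := (IsEquivalent.refl (u := fun n : ℕ => (n : ℝ) ^ k)).div (isEquivalent_choose k)
  refine h.tendsto_nhds_iff.2 (tendsto_const_nhds.congr' ?_)
  filter_upwards [eventually_ne_atTop 0] with n hn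
  simp only [Pi.div_apply]
  field_simp

theorem maxDensityT3_nonneg (k n : ℕ) : 0 ≤ maxDensityT3 k n :=
  Real.sSup_nonneg fun _ ⟨_, _, _, hd⟩ => hd ▸ by unfold pathDensity; positivity

theorem maxDensityT3_le {k : ℕ} (hk : 2 ≤ k) (n : ℕ) :
    maxDensityT3 k n ≤ (n : ℝ) ^ k / n.choose k / (k : ℝ) ^ (k - 1) := by
  refine Real.sSup_le (fun _ ⟨A, hA, hT, hd⟩ => ?_) (by positivity)
  rw [hd, pathDensity, Fintype.card_fin, div_right_comm]
  gcongr
  simpa using numPaths_le_of_t3Free hA hT hk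

theorem limsup_maxDensityT3_le {k : ℕ} (hk : 2 ≤ k) :
    atTop.limsup (fun n : ℕ => maxDensityT3 k n) ≤ (k.factorial : ℝ) / (k : ℝ) ^ (k - 1) := by
  have hlim := (tendsto_pow_div_choose k).div_const ((k : ℝ) ^ (k - 1))
  calc atTop.limsup (fun n : ℕ => maxDensityT3 k n)
      ≤ atTop.limsup (fun n : ℕ => (n : ℝ) ^ k / n.choose k / (k : ℝ) ^ (k - 1)) :=
        limsup_le_limsup (.of_forall (maxDensityT3_le hk))
          (isCoboundedUnder_le_of_le atTop (maxDensityT3_nonneg k)) hlim.isBoundedUnder_le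
    _ = _ := hlim.limsup_eq

end Density

/-- Every `T⃗₃`-free oriented graph on `n` vertices has at most
`n^k/k^{k−1}` induced copies of `P⃗ₖ`; consequently `I(P⃗ₖ, T⃗) ≤ k!/k^{k−1}`. -/
theorem inducibility_Pk_T3free_upper (k : ℕ) (hk : 2 ≤ k) :
    (∀ (n : ℕ) (A : Fin n → Fin n → Prop), IsOriented A → T3Free A →
      (numPaths A k : ℝ) ≤ (n : ℝ) ^ k / (k : ℝ) ^ (k - 1)) ∧
    Filter.atTop.limsup (fun n : ℕ => maxDensityT3 k n) ≤
      (Nat.factorial k : ℝ) / (k : ℝ) ^ (k - 1) := by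
  refine ⟨fun n A hA hT => ?_, limsup_maxDensityT3_le hk⟩
  simpa using numPaths_le_of_t3Free hA hT hk
end

section
/- For every integer k ≥ 2, the inducibility of the directed path P⃗_k over all oriented graphs satisfies I(P⃗_k) ≥ k! / ((k+1)^{k−1} − 1); this lower bound is achieved by the sequence of iterated balanced blow-ups of the directed (k+1)-cycle C⃗_{k+1} (in particular, I(P⃗₄) ≥ 6/31, I(P⃗₅) ≥ 24/259, and I(P⃗₆) ≥ 120/2801). -/
open scoped Classical

/-!
The iterated balanced blow-up of `C⃗_q` is realised on `ℕ` by comparing base-`q` digits: at the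
lowest digit where `u` and `v` differ there is an arc `u → v` iff the digit of `v` follows that
of `u` cyclically. On `Fin n` the classes are the residue classes mod `q`, and `t ↦ q t + i`
identifies the class of `i` with the same graph on fewer vertices.

For `q = k + 1`, an induced `P⃗_k` either lies inside one class or meets `k` cyclically consecutive
classes once each, so the number `N n` of copies satisfies
`N n = ∑ᵢ ∏_{j<k} |V_{i+j}| + ∑ᵢ N |V_i|`. Writing `c = k! / ((k + 1) ^ (k - 1) - 1)`, the error
`k! N n - c n ^ k` recurs over the classes up to an `O(n ^ (k - 1))` term; as `k + 1` classes of
size about `n / (k + 1)` carry only a fraction `(k + 1) ^ (2 - k) < 1` of `n ^ (k - 1)` when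
`k ≥ 3`, the error stays `O(n ^ (k - 1))` and the density tends to `c`. For `k = 2` the blow-up of `C⃗₃` is a tournament,
in which every pair spans an induced `P⃗₂`.
-/

open Finset

lemma Nat.div_add_div_lt_add_of_ne {q u v : ℕ} (hq : 2 ≤ q) (h : u ≠ v) :
    u / q + v / q < u + v := by
  rcases Nat.eq_zero_or_pos u with rfl | hu
  · simpa using Nat.div_lt_self (Nat.pos_of_ne_zero (Ne.symm h)) hq
  · have := Nat.div_lt_self hu hq
    have := Nat.div_le_self v q
    omega

def CycleBlowupArc (q u v : ℕ) : Prop :=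
  if q < 2 ∨ u = v then False
  else if u % q = v % q then CycleBlowupArc q (u / q) (v / q)
  else v % q = (u % q + 1) % q
termination_by u + v
decreasing_by exact Nat.div_add_div_lt_add_of_ne (by omega) (by omega)

section CycleBlowupArc

variable {q u v : ℕ}

lemma cycleBlowupArc_irrefl (q u : ℕ) : ¬ CycleBlowupArc q u u := by
  simp [CycleBlowupArc]

lemma cycleBlowupArc_of_mod_eq (hq : 2 ≤ q) (h : u ≠ v) (hm : u % q = v % q) :
    CycleBlowupArc q u v ↔ CycleBlowupArc q (u / q) (v / q) := by
  rw [CycleBlowupArc, if_neg (by omega), if_pos hm]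

lemma cycleBlowupArc_of_mod_ne (hq : 2 ≤ q) (hm : u % q ≠ v % q) :
    CycleBlowupArc q u v ↔ v % q = (u % q + 1) % q := by
  rw [CycleBlowupArc, if_neg (by rintro (h | rfl) <;> omega), if_neg hm]

lemma cycleBlowupArc_mul_add (hq : 2 ≤ q) {i : ℕ} (hi : i < q) (s t : ℕ) :
    CycleBlowupArc q (q * s + i) (q * t + i) ↔ CycleBlowupArc q s t := by
  have hq0 : 0 < q := by omega
  obtain rfl | hst := eq_or_ne s t
  · exact iff_of_false (cycleBlowupArc_irrefl _ _) (cycleBlowupArc_irrefl _ _)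
  have hne : q * s + i ≠ q * t + i := fun h => hst (Nat.eq_of_mul_eq_mul_left hq0 (by omega))
  rw [cycleBlowupArc_of_mod_eq hq hne (by simp),
    Nat.mul_add_div hq0, Nat.mul_add_div hq0, Nat.div_eq_of_lt hi, add_zero, add_zero]

lemma cycleBlowupArc_asymm (hq : 3 ≤ q) (u v : ℕ) :
    CycleBlowupArc q u v → ¬ CycleBlowupArc q v u := by
  induction u, v using CycleBlowupArc.induct q with
  | case1 u v h =>
    intro huv
    rw [CycleBlowupArc, if_pos h] at huv
    exact huv.elim
  | case2 u v h hm ih =>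
    rw [cycleBlowupArc_of_mod_eq (by omega) (by omega) hm,
      cycleBlowupArc_of_mod_eq (by omega) (by omega) hm.symm]
    exact ih
  | case3 u v h hm =>
    rw [cycleBlowupArc_of_mod_ne (by omega) hm, cycleBlowupArc_of_mod_ne (by omega) (Ne.symm hm)]
    intro hv hu
    -- going around twice returns to `u % q`, so `q ∣ 2`
    have h2 : u % q + 2 ≡ u % q + 0 [MOD q] := by
      conv_rhs => rw [add_zero, hu, hv]
      simp only [Nat.ModEq, Nat.mod_add_mod, add_assoc, Nat.mod_mod]
    have := (Nat.ModEq.add_left_cancel' _ h2).eq_of_lt_of_lt (by omega) (by omega)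
    omega

end CycleBlowupArc

def residueCount (q n i : ℕ) : ℕ := (n + (q - 1 - i)) / q

section residueCount

variable {q n i : ℕ}

lemma lt_residueCount_iff (hi : i < q) {t : ℕ} : t < residueCount q n i ↔ q * t + i < n := by
  rw [residueCount, Nat.lt_iff_add_one_le, Nat.le_div_iff_mul_le (by omega), add_mul, one_mul,
    mul_comm]
  omega

lemma residueCount_mul_bounds (hi : i < q) :
    q * residueCount q n i < n + q ∧ n < q * residueCount q n i + q := by
  have h := Nat.div_add_mod (n + (q - 1 - i)) q
  have := Nat.mod_lt (n + (q - 1 - i)) (show 0 < q by omega)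
  rw [← residueCount] at h
  omega

lemma abs_residueCount_sub_le (hi : i < q) : |(residueCount q n i : ℝ) - n / q| ≤ 1 := by
  have hq : (0 : ℝ) < q := by exact_mod_cast (show 0 < q by omega)
  obtain ⟨h₁, h₂⟩ := residueCount_mul_bounds (n := n) hi
  have h₁' : (q : ℝ) * residueCount q n i < n + q := by exact_mod_cast h₁
  have h₂' : (n : ℝ) < q * residueCount q n i + q := by exact_mod_cast h₂
  rw [show (residueCount q n i : ℝ) - n / q = (q * residueCount q n i - n) / q by field_simp,
    abs_div, abs_of_pos hq, div_le_one hq, abs_le]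
  constructor <;> linarith

lemma residueCount_lt (hq : 2 ≤ q) (hi : i < q) (hn : 2 ≤ n) : residueCount q n i < n := by
  have := (residueCount_mul_bounds (n := n) hi).1
  by_contra! h
  nlinarith

def residueEmbedding (q n : ℕ) (i : Fin q) : Fin (residueCount q n i) ↪ Fin n where
  toFun t := ⟨q * t + i, (lt_residueCount_iff i.2).1 t.2⟩
  inj' _ _ h :=
    Fin.ext <| Nat.eq_of_mul_eq_mul_left i.pos (Nat.add_right_cancel (congrArg Fin.val h))

@[simp]
lemma residueEmbedding_apply (i : Fin q) (t : Fin (residueCount q n i)) :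
    (residueEmbedding q n i t : ℕ) = q * t + i := rfl

lemma map_residueEmbedding (i : Fin q) :
    univ.map (residueEmbedding q n i) = univ.filter fun v : Fin n => (v : ℕ) % q = i := by
  ext v
  simp only [mem_map, mem_univ, true_and, mem_filter]
  constructor
  · rintro ⟨t, rfl⟩
    simp [Nat.mod_eq_of_lt i.2]
  · intro hv
    have := Nat.div_add_mod (v : ℕ) q
    exact ⟨⟨v / q, (lt_residueCount_iff i.2).2 (by omega)⟩, Fin.ext (by simp; omega)⟩

lemma card_filter_mod_eq (hi : i < q) :
    #(univ.filter fun v : Fin n => (v : ℕ) % q = i) = residueCount q n i := by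
  rw [← map_residueEmbedding ⟨i, hi⟩, card_map, card_univ, Fintype.card_fin]

end residueCount

lemma Nat.exists_lt_max_iff_not_succ {p : ℕ → Prop} {a b : ℕ} (ha : p a) (hb : ¬ p b) :
    ∃ j < max a b, (p j ↔ ¬ p (j + 1)) := by
  by_contra h
  have hstep : ∀ j < max a b, (p (j + 1) ↔ p j) := fun j hj => by
    by_contra hne
    exact h ⟨j, hj, by tauto⟩
  have hconst : ∀ j ≤ max a b, (p j ↔ p 0) := by
    intro j hj
    induction j with
    | zero => rfl
    | succ j ih => exact (hstep j (by omega)).trans (ih (by omega))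
  exact hb ((hconst b (le_max_right _ _)).2 ((hconst a (le_max_left _ _)).1 ha))

section InducedPath

variable {V W : Type*} {A : V → V → Prop} {k : ℕ}

lemma IsInducedPath.card_eq [DecidableEq V] {S : Finset V} (h : IsInducedPath A k S) :
    #S = k := by
  obtain ⟨f, hinj, hmem, -⟩ := h
  rw [show S = univ.image f by ext v; simpa using hmem v, card_image_of_injective _ hinj,
    card_univ, Fintype.card_fin]

lemma numPaths_le_choose [Fintype V] [DecidableEq V] (A : V → V → Prop) (k : ℕ) :
    numPaths A k ≤ (Fintype.card V).choose k := by
  rw [numPaths, ← card_univ, ← card_powersetCard]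
  exact card_le_card fun S hS => mem_powersetCard.2 ⟨subset_univ S, (mem_filter.1 hS).2.card_eq⟩

lemma isInducedPath_map_iff {B : W → W → Prop} (φ : W ↪ V) (hφ : ∀ a b, A (φ a) (φ b) ↔ B a b)
    (T : Finset W) : IsInducedPath A k (T.map φ) ↔ IsInducedPath B k T := by
  constructor
  · rintro ⟨f, hinj, hmem, harc⟩
    have hf : ∀ j, ∃ w, φ w = f j := fun j => by
      obtain ⟨w, -, hw⟩ := mem_map.1 ((hmem (f j)).2 ⟨j, rfl⟩)
      exact ⟨w, hw⟩
    choose g hg using hf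
    refine ⟨g, fun a b h => hinj (by rw [← hg, ← hg, h]), fun w => ?_, fun a b => ?_⟩
    · rw [← mem_map' φ, hmem]
      exact exists_congr fun j => by rw [← hg, φ.injective.eq_iff]
    · rw [← hφ, hg, hg, harc]
  · rintro ⟨g, hinj, hmem, harc⟩
    refine ⟨φ ∘ g, φ.injective.comp hinj, fun v => ?_, fun a b => by simp [hφ, harc]⟩
    simp only [mem_map, hmem, Function.comp_apply]
    constructor
    · rintro ⟨w, ⟨j, rfl⟩, rfl⟩; exact ⟨j, rfl⟩
    · rintro ⟨j, rfl⟩; exact ⟨g j, ⟨j, rfl⟩, rfl⟩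

end InducedPath

section Classification

variable {q k : ℕ}

lemma cycleBlowupArc_congr_of_mod_eq (hq : 2 ≤ q) {u u' w : ℕ} (hu : u % q = u' % q)
    (hw : w % q ≠ u % q) :
    (CycleBlowupArc q u w ↔ CycleBlowupArc q u' w) ∧
      (CycleBlowupArc q w u ↔ CycleBlowupArc q w u') := by
  rw [cycleBlowupArc_of_mod_ne hq (Ne.symm hw), cycleBlowupArc_of_mod_ne hq hw,
    cycleBlowupArc_of_mod_ne hq (hu ▸ Ne.symm hw), cycleBlowupArc_of_mod_ne hq (hu ▸ hw), hu]
  exact ⟨Iff.rfl, Iff.rfl⟩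

/-- Vertices of one residue class are twins for every vertex outside it, while a path vertex
has at most one in-neighbour and one out-neighbour: so no class meets a non-constant induced
path twice. -/
lemma residue_injective_of_path (hq : 2 ≤ q) {f : Fin k → ℕ}
    (harc : ∀ a b : Fin k, CycleBlowupArc q (f a) (f b) ↔ (b : ℕ) = a + 1)
    (hmix : ∀ r < q, ∃ j, f j % q ≠ r) :
    Function.Injective fun j => f j % q := by
  intro a b (hab : f a % q = f b % q)
  obtain ⟨c, hc⟩ := hmix (f a % q) (Nat.mod_lt _ (by omega))
  obtain ⟨j, hj, hpj⟩ := Nat.exists_lt_max_iff_not_succ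
    (p := fun j => ∀ h : j < k, f ⟨j, h⟩ % q = f a % q) (a := a) (b := c)
    (fun _ => rfl) (fun h => hc (h c.2))
  have hj1 : j + 1 < k := by have := max_lt a.2 c.2; omega
  have hadj := (harc ⟨j, by omega⟩ ⟨j + 1, hj1⟩).2 rfl
  by_cases hp : f ⟨j, by omega⟩ % q = f a % q
  · have hout : f ⟨j + 1, hj1⟩ % q ≠ f a % q := fun h => (hpj.1 fun _ => hp) fun _ => h
    have key : ∀ x : Fin k, f x % q = f a % q → (x : ℕ) = j := fun x hx => by
      have := (cycleBlowupArc_congr_of_mod_eq hq (hx.trans hp.symm) (hx ▸ hout)).1.2 hadj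
      have h' := (harc _ _).1 this
      simp only at h'
      omega
    exact Fin.ext ((key a rfl).trans (key b hab.symm).symm)
  · have hin : f ⟨j + 1, hj1⟩ % q = f a % q := by
      by_contra h
      exact hp (hpj.2 (fun h' => h (h' hj1)) (by omega))
    have key : ∀ x : Fin k, f x % q = f a % q → (x : ℕ) = j + 1 := fun x hx => by
      have := (cycleBlowupArc_congr_of_mod_eq hq (hin.trans hx.symm)
        fun h => hp (h.trans hin)).2.1 hadj
      exact (harc _ _).1 this
    exact Fin.ext ((key a rfl).trans (key b hab.symm).symm)

lemma residues_const_or_consecutive_of_path (hq : 2 ≤ q) {f : Fin k → ℕ}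
    (harc : ∀ a b : Fin k, CycleBlowupArc q (f a) (f b) ↔ (b : ℕ) = a + 1) :
    ∃ r < q, (∀ j, f j % q = r) ∨ ∀ j : Fin k, f j % q = (r + j) % q := by
  by_cases hconst : ∃ r < q, ∀ j, f j % q = r
  · obtain ⟨r, hr, h⟩ := hconst
    exact ⟨r, hr, Or.inl h⟩
  push Not at hconst
  obtain ⟨j₀, -⟩ := hconst 0 (by omega)
  have hinj := residue_injective_of_path hq harc hconst
  have hsucc : ∀ j (h : j + 1 < k), f ⟨j + 1, h⟩ % q = (f ⟨j, by omega⟩ % q + 1) % q :=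
    fun j h => (cycleBlowupArc_of_mod_ne hq fun he => by simpa using hinj he).1
      ((harc _ _).2 rfl)
  refine ⟨f ⟨0, j₀.pos⟩ % q, Nat.mod_lt _ (by omega), Or.inr fun ⟨j, hj⟩ => ?_⟩
  induction j with
  | zero => simp
  | succ j ih => rw [hsucc j hj, ih (by omega), Nat.mod_add_mod, add_assoc]

end Classification

def cycleBlowup (q n : ℕ) : Fin n → Fin n → Prop := fun u v => CycleBlowupArc q u v

lemma isOriented_cycleBlowup {q : ℕ} (hq : 3 ≤ q) (n : ℕ) : IsOriented (cycleBlowup q n) :=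
  fun u v => cycleBlowupArc_asymm hq u v

section Counting

variable {q k n : ℕ}

lemma cycleBlowup_residueEmbedding (hq : 2 ≤ q) (i : Fin q) (s t : Fin (residueCount q n i)) :
    cycleBlowup q n (residueEmbedding q n i s) (residueEmbedding q n i t) ↔
      cycleBlowup q (residueCount q n i) s t := by
  simp only [cycleBlowup, residueEmbedding_apply, cycleBlowupArc_mul_add hq i.2]

noncomputable def classPaths (q k n : ℕ) (i : Fin q) : Finset (Finset (Fin n)) :=
  (univ.filter (IsInducedPath (cycleBlowup q (residueCount q n i)) k)).map
    (mapEmbedding (residueEmbedding q n i)).toEmbedding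

lemma card_classPaths (i : Fin q) :
    #(classPaths q k n i) = numPaths (cycleBlowup q (residueCount q n i)) k := by
  rw [classPaths, card_map, numPaths]

lemma mem_classPaths (hq : 2 ≤ q) {i : Fin q} {S : Finset (Fin n)} :
    S ∈ classPaths q k n i ↔
      IsInducedPath (cycleBlowup q n) k S ∧ ∀ v ∈ S, (v : ℕ) % q = i := by
  have hpath := isInducedPath_map_iff (k := k) _ (cycleBlowup_residueEmbedding (n := n) hq i)
  simp only [classPaths, mem_map, mem_filter, mem_univ, true_and, RelEmbedding.coe_toEmbedding,
    mapEmbedding_apply]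
  constructor
  · rintro ⟨T, hT, rfl⟩
    refine ⟨(hpath T).2 hT, fun v hv => ?_⟩
    have := map_subset_map.2 (subset_univ T) hv
    rw [map_residueEmbedding] at this
    exact (mem_filter.1 this).2
  · rintro ⟨hS, hres⟩
    have hsub : S ⊆ univ.map (residueEmbedding q n i) := by
      rw [map_residueEmbedding]
      exact fun v hv => mem_filter.2 ⟨mem_univ v, hres v hv⟩
    obtain ⟨T, -, rfl⟩ := subset_map_iff.1 hsub
    exact ⟨T, (hpath T).1 hS, rfl⟩

noncomputable def rainbowSets (q k n i : ℕ) : Finset (Finset (Fin n)) :=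
  (Fintype.piFinset fun j : Fin k => univ.filter fun v : Fin n => (v : ℕ) % q = (i + j) % q).image
    fun g => univ.image g

lemma mem_rainbowSets {i : ℕ} {S : Finset (Fin n)} :
    S ∈ rainbowSets q k n i ↔
      ∃ g : Fin k → Fin n, (∀ j, (g j : ℕ) % q = (i + j) % q) ∧ univ.image g = S := by
  simp [rainbowSets, Fintype.mem_piFinset]

lemma card_rainbowSets (hk : k ≤ q) (i : ℕ) :
    #(rainbowSets q k n i) = ∏ j ∈ range k, residueCount q n ((i + j) % q) := by
  rw [rainbowSets, card_image_of_injOn, Fintype.card_piFinset, ← Fin.prod_univ_eq_prod_range]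
  · exact prod_congr rfl fun j _ => card_filter_mod_eq (Nat.mod_lt _ (by have := j.2; omega))
  intro g hg g' hg' h
  rw [mem_coe, Fintype.mem_piFinset] at hg hg'
  simp only [mem_filter, mem_univ, true_and] at hg hg'
  funext j
  have hmem : g j ∈ univ.image g' := by
    simp only at h
    exact h ▸ mem_image_of_mem g (mem_univ j)
  obtain ⟨j', -, hj'⟩ := mem_image.1 hmem
  have : j' = j := Fin.ext <| (Nat.ModEq.add_left_cancel' i (by
    rw [Nat.ModEq, ← hg', ← hg, hj'])).eq_of_lt_of_lt (by omega) (by omega)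
  rw [← hj', this]

lemma isInducedPath_of_mem_rainbowSets (hk : k < q) {i : ℕ} {S : Finset (Fin n)}
    (hS : S ∈ rainbowSets q k n i) : IsInducedPath (cycleBlowup q n) k S := by
  obtain ⟨g, hg, rfl⟩ := mem_rainbowSets.1 hS
  have hres : ∀ a b : Fin k, (g a : ℕ) % q = (g b : ℕ) % q → a = b := fun a b h =>
    Fin.ext <| (Nat.ModEq.add_left_cancel' i (by rw [Nat.ModEq, ← hg, ← hg, h])).eq_of_lt_of_lt
      (by omega) (by omega)
  refine ⟨g, fun a b h => hres a b (by rw [h]), fun v => by simp, fun a b => ?_⟩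
  obtain rfl | hab := eq_or_ne a b
  · exact iff_of_false (cycleBlowupArc_irrefl _ _) (by omega)
  rw [cycleBlowup, cycleBlowupArc_of_mod_ne (by omega) fun h => hab (hres a b h), hg, hg,
    Nat.mod_add_mod, add_assoc]
  exact ⟨fun h => (Nat.ModEq.add_left_cancel' i h).eq_of_lt_of_lt (by omega) (by omega),
    fun h => by rw [h]⟩

lemma disjoint_rainbowSets_classPaths (hq : 2 ≤ q) (hk : 2 ≤ k) (i : ℕ) (i' : Fin q) :
    Disjoint (rainbowSets q k n i) (classPaths q k n i') := by
  refine disjoint_left.2 fun S hS hS' => ?_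
  obtain ⟨g, hg, rfl⟩ := mem_rainbowSets.1 hS
  have hres := ((mem_classPaths hq).1 hS').2
  have h₀ := hres (g ⟨0, by omega⟩) (mem_image_of_mem g (mem_univ _))
  have h₁ := hres (g ⟨1, by omega⟩) (mem_image_of_mem g (mem_univ _))
  have h01 : (i + 0) % q = (i + 1) % q := by simpa [hg] using h₀.trans h₁.symm
  have := (Nat.ModEq.add_left_cancel' i h01).eq_of_lt_of_lt (by omega) (by omega)
  omega

lemma disjoint_classPaths (hq : 2 ≤ q) (hk : 1 ≤ k) {i i' : Fin q} (h : i ≠ i') :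
    Disjoint (classPaths q k n i) (classPaths q k n i') := by
  refine disjoint_left.2 fun S hS hS' => ?_
  rw [mem_classPaths hq] at hS hS'
  obtain ⟨v, hv⟩ := card_pos.1 (hS.1.card_eq ▸ hk)
  exact h (Fin.ext ((hS.2 v hv).symm.trans (hS'.2 v hv)))

/-- A rainbow set for `i` misses exactly the class of `i + k` (mod `k + 1`), which determines
`i`. -/
lemma disjoint_rainbowSets {i i' : ℕ} (hi : i < k + 1) (hi' : i' < k + 1) (h : i ≠ i') :
    Disjoint (rainbowSets (k + 1) k n i) (rainbowSets (k + 1) k n i') := by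
  refine disjoint_left.2 fun S hS hS' => ?_
  obtain ⟨g, hg, rfl⟩ := mem_rainbowSets.1 hS
  obtain ⟨g', hg', hgg'⟩ := mem_rainbowSets.1 hS'
  set j := (i' + k + k * i) % (k + 1)
  have hj : (i + j) % (k + 1) = (i' + k) % (k + 1) := by
    rw [Nat.add_mod_mod, show i + (i' + k + k * i) = i' + k + (k + 1) * i by ring,
      Nat.add_mul_mod_self_left]
  have hjk : j < k := by
    refine lt_of_le_of_ne (Nat.lt_succ_iff.1 (Nat.mod_lt _ (by omega))) fun hjk => h ?_
    rw [hjk] at hj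
    exact (Nat.ModEq.add_right_cancel' k hj).eq_of_lt_of_lt hi hi'
  have hmem : g ⟨j, hjk⟩ ∈ univ.image g' := by
    rw [hgg']
    exact mem_image_of_mem g (mem_univ _)
  obtain ⟨j', -, hj'⟩ := mem_image.1 hmem
  have := hg ⟨j, hjk⟩
  rw [← hj', hg', hj] at this
  have := (Nat.ModEq.add_left_cancel' i' this).eq_of_lt_of_lt (by omega) (by omega)
  omega

theorem numPaths_cycleBlowup (hk : 2 ≤ k) (n : ℕ) :
    numPaths (cycleBlowup (k + 1) n) k =
      ∑ i : Fin (k + 1), ∏ j ∈ range k, residueCount (k + 1) n ((i + j) % (k + 1)) +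
        ∑ i : Fin (k + 1), numPaths (cycleBlowup (k + 1) (residueCount (k + 1) n i)) k := by
  have hsplit : univ.filter (IsInducedPath (cycleBlowup (k + 1) n) k) =
      univ.biUnion (fun i : Fin (k + 1) => rainbowSets (k + 1) k n i) ∪
        univ.biUnion (classPaths (k + 1) k n) := by
    ext S
    simp only [mem_filter, mem_univ, true_and, mem_union, mem_biUnion]
    constructor
    · intro hS
      obtain ⟨f, -, hmem, harc⟩ := id hS
      obtain ⟨r, hr, hclass | hrainbow⟩ :=
        residues_const_or_consecutive_of_path (f := fun j => (f j : ℕ)) (by omega) harc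
      · refine Or.inr ⟨⟨r, hr⟩, (mem_classPaths (by omega)).2 ⟨hS, ?_⟩⟩
        intro v hv
        obtain ⟨j, rfl⟩ := (hmem v).1 hv
        exact hclass j
      · exact Or.inl ⟨⟨r, hr⟩, mem_rainbowSets.2 ⟨f, hrainbow, by ext v; simp [hmem]⟩⟩
    · rintro (⟨i, hS⟩ | ⟨i, hS⟩)
      · exact isInducedPath_of_mem_rainbowSets (by omega) hS
      · exact ((mem_classPaths (by omega)).1 hS).1
  rw [numPaths, hsplit, card_union_of_disjoint, card_biUnion, card_biUnion]
  · simp only [card_rainbowSets (Nat.le_succ k), card_classPaths]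
  · exact fun i _ i' _ h => disjoint_classPaths (by omega) (by omega) h
  · exact fun i _ i' _ h => disjoint_rainbowSets i.2 i'.2 (Fin.val_ne_of_ne h)
  · simp only [disjoint_biUnion_left, disjoint_biUnion_right]
    exact fun i _ i' _ => disjoint_rainbowSets_classPaths (by omega) hk _ _

end Counting

lemma abs_prod_sub_pow_card_le {ι : Type*} (s : Finset ι) {a : ι → ℝ} {x : ℝ} (hx : 0 ≤ x)
    (ha : ∀ i ∈ s, |a i - x| ≤ 1) : |∏ i ∈ s, a i - x ^ #s| ≤ #s * (x + 1) ^ (#s - 1) := by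
  induction s using Finset.cons_induction with
  | empty => simp
  | cons y s hy ih =>
    have ih := ih fun i hi => ha i (mem_cons_of_mem hi)
    have hay : |a y| ≤ x + 1 := by
      have := ha y (mem_cons_self y s)
      rw [abs_le] at this ⊢
      constructor <;> linarith
    have hxs : |x ^ #s| ≤ (x + 1) ^ #s := by
      rw [abs_of_nonneg (by positivity)]
      exact pow_le_pow_left₀ hx (by linarith) _
    have hpow : (x + 1) * (#s * (x + 1) ^ (#s - 1)) = #s * (x + 1) ^ #s := by
      rcases Nat.eq_zero_or_pos #s with h | h
      · simp [h]
      · rw [mul_left_comm, ← pow_succ', Nat.sub_add_cancel h]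
    rw [prod_cons, card_cons, Nat.add_sub_cancel, Nat.cast_succ]
    calc |a y * ∏ i ∈ s, a i - x ^ (#s + 1)|
        = |a y * (∏ i ∈ s, a i - x ^ #s) + (a y - x) * x ^ #s| := by ring_nf
      _ ≤ |a y| * |∏ i ∈ s, a i - x ^ #s| + |a y - x| * |x ^ #s| := by
        rw [← abs_mul, ← abs_mul]; exact abs_add_le _ _
      _ ≤ (x + 1) * (#s * (x + 1) ^ (#s - 1)) + 1 * (x + 1) ^ #s := by
        gcongr
        exact ha y (mem_cons_self y s)
      _ = (#s + 1) * (x + 1) ^ #s := by rw [hpow]; ring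

lemma abs_sum_prod_sub_le {ι κ : Type*} (t : Finset κ) (s : Finset ι) {a : κ → ι → ℝ} {x : ℝ}
    (hx : 0 ≤ x) (ha : ∀ i ∈ t, ∀ j ∈ s, |a i j - x| ≤ 1) :
    |∑ i ∈ t, ∏ j ∈ s, a i j - #t * x ^ #s| ≤ #t * (#s * (x + 1) ^ (#s - 1)) := by
  rw [← nsmul_eq_mul, ← sum_const, ← sum_sub_distrib, ← nsmul_eq_mul, ← sum_const]
  exact (abs_sum_le_sum_abs _ _).trans
    (sum_le_sum fun i hi => abs_prod_sub_pow_card_le s hx (ha i hi))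

/-- `hq` makes the `q` recursive terms, on at most `5n/(4q)` points each, weigh at most half of
`n ^ m`. -/
lemma abs_le_of_abs_le_sum_parts {q m : ℕ} {M : ℝ} {e : ℕ → ℝ} {s : Fin q → ℕ → ℕ}
    (hM : 0 ≤ M) (hq : 2 * q * (5 / 4 : ℝ) ^ m ≤ q ^ m)
    (hs : ∀ n, 4 * q ≤ n → ∀ i, s i n < n ∧ (s i n : ℝ) ≤ n / q + 1)
    (hsmall : ∀ n < 4 * q, |e n| ≤ M * n ^ m)
    (hrec : ∀ n, 4 * q ≤ n → |e n| ≤ ∑ i, |e (s i n)| + M * n ^ m) (n : ℕ) :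
    |e n| ≤ 2 * M * n ^ m := by
  induction n using Nat.strong_induction_on with
  | _ n ih =>
  rcases lt_or_ge n (4 * q) with hn | hn
  · exact (hsmall n hn).trans (by nlinarith [pow_nonneg (Nat.cast_nonneg (α := ℝ) n) m])
  obtain rfl | hq0 := Nat.eq_zero_or_pos q
  · have h := hrec n hn
    rw [univ_eq_empty, sum_empty, zero_add] at h
    exact h.trans (by nlinarith [pow_nonneg (Nat.cast_nonneg (α := ℝ) n) m])
  have hqR : (0 : ℝ) < q := by exact_mod_cast hq0
  have hpart : ∀ i, |e (s i n)| ≤ 2 * M * (5 / 4 * n / q) ^ m := fun i => by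
    have : (4 * q : ℝ) ≤ n := by exact_mod_cast hn
    have hsi : (s i n : ℝ) ≤ 5 / 4 * n / q := by
      calc (s i n : ℝ) ≤ n / q + 1 := (hs n hn i).2
        _ ≤ 5 / 4 * n / q := by
          rw [div_add_one hqR.ne', div_le_div_iff_of_pos_right hqR]; linarith
    calc |e (s i n)| ≤ 2 * M * (s i n : ℝ) ^ m := ih _ (hs n hn i).1
      _ ≤ 2 * M * (5 / 4 * n / q) ^ m := by gcongr
  calc |e n| ≤ ∑ i, |e (s i n)| + M * n ^ m := hrec n hn
    _ ≤ ∑ _i : Fin q, 2 * M * (5 / 4 * n / q) ^ m + M * n ^ m := by gcongr with i; exact hpart i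
    _ = M * (2 * q * (5 / 4) ^ m / q ^ m) * n ^ m + M * n ^ m := by
      rw [sum_const, card_univ, Fintype.card_fin, nsmul_eq_mul, div_pow, mul_pow]
      field_simp
    _ ≤ M * 1 * n ^ m + M * n ^ m := by
      gcongr
      exact (div_le_one (by positivity)).2 hq
    _ = 2 * M * n ^ m := by ring

noncomputable def cycleBlowupDensity (k : ℕ) : ℝ :=
  (Nat.factorial k : ℝ) / (((k : ℝ) + 1) ^ (k - 1) - 1)

noncomputable def pathCountError (k n : ℕ) : ℝ :=
  k.factorial * numPaths (cycleBlowup (k + 1) n) k - cycleBlowupDensity k * n ^ k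

section Asymptotics

variable {k : ℕ}

/-- `cycleBlowupDensity k` is the fixed point of `d ↦ (k! + d) / (k + 1) ^ (k - 1)`: rainbow copies
have density `k! / (k + 1) ^ (k - 1)`, and a `(k + 1) ^ (1 - k)` fraction of all `k`-sets lies
inside a single class. -/
lemma cycleBlowupDensity_mul_pow (hk : 2 ≤ k) :
    cycleBlowupDensity k * ((k : ℝ) + 1) ^ (k - 1) = k.factorial + cycleBlowupDensity k := by
  have : (1 : ℝ) < ((k : ℝ) + 1) ^ (k - 1) := one_lt_pow₀ (by norm_cast; omega) (by omega)
  rw [cycleBlowupDensity]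
  field_simp [(sub_pos.2 this).ne']
  ring

lemma cycleBlowupDensity_nonneg (k : ℕ) : 0 ≤ cycleBlowupDensity k :=
  div_nonneg (by positivity) (sub_nonneg.2 (one_le_pow₀ (by linarith [k.cast_nonneg (α := ℝ)])))

lemma abs_pathCountError_le (n : ℕ) :
    |pathCountError k n| ≤ (1 + cycleBlowupDensity k) * n ^ k := by
  have hc := cycleBlowupDensity_nonneg k
  have hN : (k.factorial : ℝ) * numPaths (cycleBlowup (k + 1) n) k ≤ n ^ k := by
    have := numPaths_le_choose (cycleBlowup (k + 1) n) k
    rw [Fintype.card_fin] at this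
    exact_mod_cast (Nat.mul_le_mul_left _ this).trans
      ((Nat.descFactorial_eq_factorial_mul_choose n k).symm.le.trans (Nat.descFactorial_le_pow n k))
  calc |pathCountError k n|
      ≤ |(k.factorial : ℝ) * numPaths (cycleBlowup (k + 1) n) k| + |cycleBlowupDensity k * n ^ k| :=
        abs_sub _ _
    _ ≤ n ^ k + cycleBlowupDensity k * n ^ k := by
      rw [abs_of_nonneg (by positivity), abs_of_nonneg (by positivity)]
      linarith
    _ = (1 + cycleBlowupDensity k) * n ^ k := by ring

lemma pathCountError_eq_sum_add (hk : 2 ≤ k) (n : ℕ) :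
    pathCountError k n = ∑ i : Fin (k + 1), pathCountError k (residueCount (k + 1) n i) +
      (k.factorial * (∑ i : Fin (k + 1), ∏ j ∈ range k,
          (residueCount (k + 1) n ((i + j) % (k + 1)) : ℝ) - (k + 1) * (n / (k + 1)) ^ k) +
        cycleBlowupDensity k * (∑ i : Fin (k + 1), (residueCount (k + 1) n i : ℝ) ^ k -
          (k + 1) * (n / (k + 1)) ^ k)) := by
  have hfix : ((k.factorial : ℝ) + cycleBlowupDensity k) * ((k + 1) * (n / (k + 1)) ^ k) =
      cycleBlowupDensity k * n ^ k := by
    rw [← cycleBlowupDensity_mul_pow hk, div_pow]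
    field_simp
    rw [mul_assoc (cycleBlowupDensity k), ← pow_succ', Nat.sub_add_cancel (by omega)]
    ring
  have hrec : (numPaths (cycleBlowup (k + 1) n) k : ℝ) = _ :=
    congrArg (Nat.cast (R := ℝ)) (numPaths_cycleBlowup hk n)
  push_cast at hrec
  simp only [pathCountError, sum_sub_distrib, ← mul_sum, hrec]
  linear_combination hfix

lemma abs_pathCountError_le_sum (hk : 2 ≤ k) {n : ℕ} (hn : 4 * (k + 1) ≤ n) :
    |pathCountError k n| ≤ ∑ i : Fin (k + 1), |pathCountError k (residueCount (k + 1) n i)| +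
      (k.factorial + cycleBlowupDensity k) * (k + 1) * k * n ^ (k - 1) := by
  set c := cycleBlowupDensity k
  set x : ℝ := n / (k + 1) with hx_def
  have hk0 : (0 : ℝ) < k + 1 := by positivity
  have hx : 0 ≤ x := by positivity
  have hx1 : x + 1 ≤ n := by
    have : (4 * (k + 1) : ℝ) ≤ n := by exact_mod_cast hn
    have hk2 : (2 : ℝ) ≤ k := by exact_mod_cast hk
    rw [hx_def, div_add_one hk0.ne', div_le_iff₀ hk0]
    nlinarith [mul_le_mul_of_nonneg_left hk2 (Nat.cast_nonneg (α := ℝ) n)]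
  have hpow : (x + 1) ^ (k - 1) ≤ (n : ℝ) ^ (k - 1) := pow_le_pow_left₀ (by positivity) hx1 _
  have hres : ∀ i < k + 1, |(residueCount (k + 1) n i : ℝ) - x| ≤ 1 := fun i hi => by
    simpa using abs_residueCount_sub_le (n := n) hi
  have hT := abs_sum_prod_sub_le (univ : Finset (Fin (k + 1))) (range k)
    (a := fun i j => (residueCount (k + 1) n ((i + j) % (k + 1)) : ℝ)) hx
    fun i _ j _ => hres _ (Nat.mod_lt _ (by omega))
  have hS := abs_sum_prod_sub_le (univ : Finset (Fin (k + 1))) (range k)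
    (a := fun i _ => (residueCount (k + 1) n i : ℝ)) hx fun i _ _ _ => hres _ i.2
  simp only [card_univ, Fintype.card_fin, card_range, prod_const] at hT hS
  push_cast at hT hS
  have hc := cycleBlowupDensity_nonneg k
  rw [pathCountError_eq_sum_add hk]
  refine (abs_add_le _ _).trans (add_le_add (abs_sum_le_sum_abs _ _) ?_)
  refine (abs_add_le _ _).trans ?_
  rw [abs_mul, abs_mul, abs_of_nonneg (by positivity), abs_of_nonneg hc]
  calc _ ≤ k.factorial * ((k + 1) * (k * n ^ (k - 1))) + c * ((k + 1) * (k * n ^ (k - 1))) := by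
        gcongr
        exacts [hT.trans (by gcongr), hS.trans (by gcongr)]
    _ = _ := by ring

lemma two_mul_mul_five_div_four_pow_le (hk : 3 ≤ k) :
    2 * ((k + 1 : ℕ) : ℝ) * (5 / 4) ^ (k - 1) ≤ ((k + 1 : ℕ) : ℝ) ^ (k - 1) := by
  obtain ⟨m, rfl⟩ : ∃ m, k = m + 3 := ⟨k - 3, by omega⟩
  rw [show m + 3 - 1 = m + 2 by omega]
  push_cast
  calc 2 * ((m : ℝ) + 3 + 1) * (5 / 4) ^ (m + 2) = 2 * (m + 4) * (25 / 16) * (5 / 4) ^ m := by ring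
    _ ≤ (m + 4) ^ 2 * (m + 4) ^ m := by
      gcongr
      · nlinarith [m.cast_nonneg (α := ℝ)]
      · linarith [m.cast_nonneg (α := ℝ)]
    _ = ((m : ℝ) + 3 + 1) ^ (m + 2) := by ring

lemma exists_abs_pathCountError_le (hk : 3 ≤ k) :
    ∃ K, ∀ n, |pathCountError k n| ≤ K * n ^ (k - 1) := by
  set c := cycleBlowupDensity k
  have hc := cycleBlowupDensity_nonneg k
  have hfac : (1 : ℝ) ≤ k.factorial := by exact_mod_cast k.factorial_pos
  have hk1 : (1 : ℝ) ≤ k := by exact_mod_cast (by omega : 1 ≤ k)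
  have hpos : (0 : ℝ) ≤ ((k : ℝ) + 1) * k * (k.factorial + c) := by positivity
  refine ⟨2 * (4 * (((k : ℝ) + 1) * k * (k.factorial + c))), fun n =>
    abs_le_of_abs_le_sum_parts (q := k + 1) (s := fun i n => residueCount (k + 1) n i)
      (by positivity) (two_mul_mul_five_div_four_pow_le hk) (fun n hn i => ⟨?_, ?_⟩) ?_ ?_ n⟩
  · exact residueCount_lt (by omega) i.2 (by omega)
  · linarith [abs_le.1 (abs_residueCount_sub_le (n := n) i.2)]
  · intro n hn
    have hn' : (n : ℝ) ≤ 4 * (k + 1) := by exact_mod_cast hn.le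
    calc |pathCountError k n| ≤ (1 + c) * n ^ k := abs_pathCountError_le n
      _ = (1 + c) * n * n ^ (k - 1) := by rw [mul_assoc, ← pow_succ', Nat.sub_add_cancel (by omega)]
      _ ≤ (k * (k.factorial + c)) * (4 * (k + 1)) * n ^ (k - 1) := by
        gcongr
        nlinarith
      _ = _ := by ring
  · intro n hn
    have hX : (k.factorial + c) * (k + 1) * k ≤ 4 * (((k : ℝ) + 1) * k * (k.factorial + c)) := by
      nlinarith
    exact (abs_pathCountError_le_sum (by omega) hn).trans
      (add_le_add le_rfl (mul_le_mul_of_nonneg_right hX (by positivity)))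

end Asymptotics

open Filter Topology Asymptotics in
lemma tendsto_div_choose_of_abs_sub_le {k : ℕ} {a : ℕ → ℝ} {c K : ℝ} (hk : 1 ≤ k)
    (h : ∀ n, |k.factorial * a n - c * n ^ k| ≤ K * n ^ (k - 1)) :
    Tendsto (fun n => a n / n.choose k) atTop (𝓝 c) := by
  have hnorm : Tendsto (fun n : ℕ => k.factorial * a n / n ^ k) atTop (𝓝 c) := by
    refine tendsto_sub_nhds_zero_iff.1
      (squeeze_zero_norm' ?_ (tendsto_const_div_atTop_nhds_zero_nat K))
    filter_upwards [eventually_ge_atTop 1] with n hn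
    have hn0 : (0 : ℝ) < n := by exact_mod_cast hn
    have hpow : (0 : ℝ) < n ^ k := pow_pos hn0 k
    rw [Real.norm_eq_abs, show k.factorial * a n / n ^ k - c =
      (k.factorial * a n - c * n ^ k) / n ^ k by field_simp, abs_div, abs_of_pos hpow,
      div_le_div_iff₀ hpow hn0]
    calc |k.factorial * a n - c * n ^ k| * n ≤ K * n ^ (k - 1) * n :=
          mul_le_mul_of_nonneg_right (h n) hn0.le
      _ = K * n ^ k := by rw [mul_assoc, ← pow_succ, Nat.sub_add_cancel hk]
  have hchoose : Tendsto (fun n : ℕ => (n.choose k : ℝ) / (n ^ k / k.factorial)) atTop (𝓝 1) :=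
    (isEquivalent_iff_tendsto_one (eventually_atTop.2 ⟨1, fun n hn => by positivity⟩)).1
      (isEquivalent_choose k)
  refine ((hnorm.div hchoose one_ne_zero).congr' ?_).trans (by rw [div_one])
  filter_upwards [eventually_ge_atTop k] with n hn
  have : (0 : ℝ) < n.choose k := by exact_mod_cast Nat.choose_pos hn
  have : (0 : ℝ) < n := by exact_mod_cast (show 0 < n by omega)
  simp only [Pi.div_apply]
  field_simp

lemma cycleBlowupArc_three_or (u v : ℕ) :
    u ≠ v → CycleBlowupArc 3 u v ∨ CycleBlowupArc 3 v u := by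
  induction u, v using CycleBlowupArc.induct 3 with
  | case1 u v h => omega
  | case2 u v h hm ih =>
    intro huv
    rw [cycleBlowupArc_of_mod_eq (by norm_num) huv hm,
      cycleBlowupArc_of_mod_eq (by norm_num) (Ne.symm huv) hm.symm]
    exact ih (by omega)
  | case3 u v h hm =>
    intro _
    rw [cycleBlowupArc_of_mod_ne (by norm_num) hm,
      cycleBlowupArc_of_mod_ne (by norm_num) (Ne.symm hm)]
    omega

lemma numPaths_two_of_tournament {V : Type*} [Fintype V] [DecidableEq V] {A : V → V → Prop}
    (hA : IsOriented A) (htot : ∀ u v, u ≠ v → A u v ∨ A v u) :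
    numPaths A 2 = (Fintype.card V).choose 2 := by
  rw [numPaths, ← card_univ, ← card_powersetCard]
  congr 1
  ext S
  simp only [mem_filter, mem_univ, true_and, mem_powersetCard, subset_univ]
  refine ⟨IsInducedPath.card_eq, fun hS => ?_⟩
  obtain ⟨a, b, hab, rfl⟩ := card_eq_two.1 hS
  wlog h : A a b generalizing a b
  · rw [pair_comm]
    exact this b a hab.symm (by rw [pair_comm]; exact hS) ((htot a b hab).resolve_left h)
  have hirr : ∀ v, ¬ A v v := fun v hv => hA v v hv hv
  refine ⟨![a, b], ?_, fun v => ?_, fun i j => ?_⟩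
  · intro i j
    fin_cases i <;> fin_cases j <;> simp [hab, hab.symm]
  · simp [Fin.exists_fin_two, eq_comm]
  · fin_cases i <;> fin_cases j <;> simp [h, hA a b h, hirr]

open Filter Topology in
theorem tendsto_pathDensity_cycleBlowup {k : ℕ} (hk : 2 ≤ k) :
    Tendsto (fun n => pathDensity (cycleBlowup (k + 1) n) k) atTop (𝓝 (cycleBlowupDensity k)) := by
  rcases hk.eq_or_lt with rfl | hk
  · have hd : cycleBlowupDensity 2 = 1 := by norm_num [cycleBlowupDensity]
    rw [hd]
    refine tendsto_const_nhds.congr' ?_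
    filter_upwards [eventually_ge_atTop 2] with n hn
    have : (0 : ℝ) < n.choose 2 := by exact_mod_cast Nat.choose_pos hn
    rw [pathDensity, numPaths_two_of_tournament (isOriented_cycleBlowup le_rfl n)
      fun u v h => cycleBlowupArc_three_or u v (Fin.val_ne_of_ne h), Fintype.card_fin,
      div_self this.ne']
  · obtain ⟨K, hK⟩ := exists_abs_pathCountError_le hk
    simpa [pathDensity] using tendsto_div_choose_of_abs_sub_le
      (a := fun n => (numPaths (cycleBlowup (k + 1) n) k : ℝ)) (by omega) hK

lemma pathDensity_nonneg {V : Type*} [Fintype V] [DecidableEq V] (A : V → V → Prop) (k : ℕ) :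
    0 ≤ pathDensity A k := by
  unfold pathDensity
  positivity

lemma pathDensity_le_one {V : Type*} [Fintype V] [DecidableEq V] (A : V → V → Prop) (k : ℕ) :
    pathDensity A k ≤ 1 :=
  div_le_one_of_le₀ (by exact_mod_cast numPaths_le_choose A k) (Nat.cast_nonneg _)

open Filter Topology in
lemma le_liminf_maxDensityAll {k : ℕ} {A : (n : ℕ) → Fin n → Fin n → Prop} {d : ℝ}
    (hA : ∀ n, IsOriented (A n)) (hd : Tendsto (fun n => pathDensity (A n) k) atTop (𝓝 d)) :
    d ≤ atTop.liminf fun n => maxDensityAll k n := by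
  have hle_one : ∀ n, ∀ x ∈ {x | ∃ B : Fin n → Fin n → Prop, IsOriented B ∧ x = pathDensity B k},
      x ≤ 1 := by
    rintro n x ⟨B, -, rfl⟩
    exact pathDensity_le_one B k
  rw [← hd.liminf_eq]
  refine liminf_le_liminf (Eventually.of_forall fun n => le_csSup ⟨1, hle_one n⟩ ⟨A n, hA n, rfl⟩)
    (isBoundedUnder_of ⟨0, fun n => pathDensity_nonneg (A n) k⟩)
    (IsBoundedUnder.isCoboundedUnder_ge (isBoundedUnder_of ⟨1, fun n => ?_⟩))
  exact csSup_le ⟨_, A n, hA n, rfl⟩ (hle_one n)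

/-- `I(P⃗ₖ) ≥ k!/((k+1)^{k−1} − 1)`, and this bound is achieved in
the limit by a sequence of oriented graphs (the iterated balanced blow-ups of
`C⃗_{k+1}`); in particular `I(P⃗₄) ≥ 6/31`, `I(P⃗₅) ≥ 24/259`, `I(P⃗₆) ≥ 120/2801`. -/
theorem inducibility_Pk_lower (k : ℕ) (hk : 2 ≤ k) :
    (Nat.factorial k : ℝ) / (((k : ℝ) + 1) ^ (k - 1) - 1) ≤
      Filter.atTop.liminf (fun n : ℕ => maxDensityAll k n) ∧
    ∃ A : (n : ℕ) → Fin n → Fin n → Prop, (∀ n, IsOriented (A n)) ∧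
      Filter.Tendsto (fun n : ℕ => pathDensity (A n) k) Filter.atTop
        (nhds ((Nat.factorial k : ℝ) / (((k : ℝ) + 1) ^ (k - 1) - 1))) := by
  have hA : ∀ n, IsOriented (cycleBlowup (k + 1) n) := isOriented_cycleBlowup (by omega)
  have hlim := tendsto_pathDensity_cycleBlowup hk
  exact ⟨le_liminf_maxDensityAll hA hlim, _, hA, hlim⟩
end
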